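/- Every orbit D of G_{e}(k) (the edge group attached to the edge {v0,v1}) on P^1(F) is either an orbit of G_{v0}(k) or an orbit of G_{v1}(k): namely, on {|z| ≤ 1} the G_e(k)-orbits coincide with the G_{v1}(k)-orbits (discs of radius |ϖ|^{k−1}), and on {|1/w| ≤ |ϖ|} they coincide with the G_{v0}(k)-orbits (discs of radius |ϖ|^k in coordinate 1/w). -/

import Mathlib

open Matrix Pointwise
open scoped OnePoint

noncomputable section

/-- `ϖ` is a uniformizer of the nonarchimedean field `F`. -/
def IsUniformizer (F : Type*) [NormedField F] (ϖ : F) : Prop :=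
  ϖ ≠ 0 ∧ ‖ϖ‖ < 1 ∧ ∀ x : F, ‖x‖ < 1 → ‖x‖ ≤ ‖ϖ‖

/-- The principal congruence subgroup `G_{v₀}(k)` of level `k`: matrices in `GL₂(𝒪)`
congruent to the identity modulo `ϖ^k` (entrywise, each entry of `g - 1` lies in `ϖ^k 𝒪`,
i.e. has norm at most `‖ϖ‖^k`). -/
def Gv0 (F : Type*) [NormedField F] (ϖ : F) (k : ℕ) : Set (GL (Fin 2) F) :=
  {g | ‖(g : Matrix (Fin 2) (Fin 2) F) 0 0 - 1‖ ≤ ‖ϖ‖ ^ k ∧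
       ‖(g : Matrix (Fin 2) (Fin 2) F) 0 1‖ ≤ ‖ϖ‖ ^ k ∧
       ‖(g : Matrix (Fin 2) (Fin 2) F) 1 0‖ ≤ ‖ϖ‖ ^ k ∧
       ‖(g : Matrix (Fin 2) (Fin 2) F) 1 1 - 1‖ ≤ ‖ϖ‖ ^ k}

/-- The diagonal matrix `diag(ϖ, 1)` as an element of `GL₂(F)`. -/
def dmat (F : Type*) [Field F] (ϖ : F) (h : ϖ ≠ 0) : GL (Fin 2) F :=
  Matrix.GeneralLinearGroup.mkOfDetNeZero !![ϖ, 0; 0, 1]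
    (by simpa [Matrix.det_fin_two_of] using h)

/-- `G_{v₁}(k) = diag(ϖ,1) · G_{v₀}(k) · diag(ϖ,1)⁻¹`. -/
def Gv1 (F : Type*) [NormedField F] (ϖ : F) (h : ϖ ≠ 0) (k : ℕ) : Set (GL (Fin 2) F) :=
  (fun g => dmat F ϖ h * g * (dmat F ϖ h)⁻¹) '' Gv0 F ϖ k

/-- The explicit set `H` of matrices `[[1+ϖ^k a, ϖ^k b],[ϖ^{k-1} c, 1+ϖ^k d]]`, `a,b,c,d ∈ 𝒪`;
this is the edge group `G_e(k)`. -/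
def Ge (F : Type*) [NormedField F] (ϖ : F) (k : ℕ) : Set (GL (Fin 2) F) :=
  {g | ‖(g : Matrix (Fin 2) (Fin 2) F) 0 0 - 1‖ ≤ ‖ϖ‖ ^ k ∧
       ‖(g : Matrix (Fin 2) (Fin 2) F) 0 1‖ ≤ ‖ϖ‖ ^ k ∧
       ‖(g : Matrix (Fin 2) (Fin 2) F) 1 0‖ ≤ ‖ϖ‖ ^ (k - 1) ∧
       ‖(g : Matrix (Fin 2) (Fin 2) F) 1 1 - 1‖ ≤ ‖ϖ‖ ^ k}

/-- The explicit description of `G_{v₁}(k)`: matrices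
`[[1+ϖ^k a, ϖ^{k+1} b],[ϖ^{k-1} c, 1+ϖ^k d]]` with `a,b,c,d ∈ 𝒪`. -/
def Gv1ex (F : Type*) [NormedField F] (ϖ : F) (k : ℕ) : Set (GL (Fin 2) F) :=
  {g | ‖(g : Matrix (Fin 2) (Fin 2) F) 0 0 - 1‖ ≤ ‖ϖ‖ ^ k ∧
       ‖(g : Matrix (Fin 2) (Fin 2) F) 0 1‖ ≤ ‖ϖ‖ ^ (k + 1) ∧
       ‖(g : Matrix (Fin 2) (Fin 2) F) 1 0‖ ≤ ‖ϖ‖ ^ (k - 1) ∧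
       ‖(g : Matrix (Fin 2) (Fin 2) F) 1 1 - 1‖ ≤ ‖ϖ‖ ^ k}

open scoped Classical in
/-- The right Möbius action of `g = [[a,b],[c,d]]` on `ℙ¹(F) = F ∪ {∞}` (here modelled as
`Option F`, with `none = ∞`): `z·g = (az+c)/(bz+d)`, `∞·g = a/b`, with value `∞` when the
denominator vanishes. -/
def moeb (F : Type*) [Field F] (g : Matrix (Fin 2) (Fin 2) F) : Option F → Option F
  | Option.some z => if g 0 1 * z + g 1 1 = 0 then Option.none
      else Option.some ((g 0 0 * z + g 1 0) / (g 0 1 * z + g 1 1))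
  | Option.none => if g 0 1 = 0 then Option.none else Option.some (g 0 0 / g 0 1)

/-- The orbit of `z ∈ ℙ¹(F)` under a set `S` of elements of `GL₂(F)` acting on the right by
Möbius transformations. -/
def orb (F : Type*) [Field F] (S : Set (GL (Fin 2) F)) (z : Option F) : Set (Option F) :=
  {w | ∃ g ∈ S, moeb F (g : Matrix (Fin 2) (Fin 2) F) z = w}

/-- `D` is an orbit of `S` on `ℙ¹(F)`. -/
def IsOrbit (F : Type*) [Field F] (S : Set (GL (Fin 2) F)) (D : Set (Option F)) : Prop :=
  ∃ z, D = orb F S z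

/-- The region `B_w(∞, |ϖ|) = {w ∈ ℙ¹(F) : |1/w| ≤ |ϖ|} = {|w| ≥ |ϖ|⁻¹} ∪ {∞}`. -/
def regionInfty (F : Type*) [NormedField F] (ϖ : F) : Set (Option F) :=
  {w | w = Option.none ∨ ∃ z : F, w = Option.some z ∧ ‖ϖ‖⁻¹ ≤ ‖z‖}

/-- The coordinate `1/w` on `ℙ¹(F)`, with `1/∞ = 0`. -/
def invc (F : Type*) [Field F] : Option F → F
  | Option.none => 0
  | Option.some z => z⁻¹

/-- The residue field of `F` has cardinality `q`: there are exactly `q` classes in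
`𝒪/(ϖ)`, witnessed by a set of representatives. -/
def ResidueCard (F : Type*) [NormedField F] (ϖ : F) (q : ℕ) : Prop :=
  ∃ s : Finset F, s.card = q ∧ (∀ x ∈ s, ‖x‖ ≤ 1) ∧
    ∀ x : F, ‖x‖ ≤ 1 → ∃! y, y ∈ s ∧ ‖x - y‖ ≤ ‖ϖ‖

/-- The conjugate `h S h⁻¹` of a set of matrices. -/
def conjSet (F : Type*) [Field F] (h : GL (Fin 2) F) (S : Set (GL (Fin 2) F)) :
    Set (GL (Fin 2) F) :=
  (fun g => h * g * h⁻¹) '' S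

/-- The matrix `g_α = [[1,0],[α,ϖ]]` as an element of `GL₂(F)`. -/
def galpha (F : Type*) [Field F] (ϖ α : F) (h : ϖ ≠ 0) : GL (Fin 2) F :=
  Matrix.GeneralLinearGroup.mkOfDetNeZero !![1, 0; α, ϖ]
    (by simpa [Matrix.det_fin_two_of] using h)

/-- The diagonal matrix `diag(1, ϖ^n)` as an element of `GL₂(F)`. -/
def dmatN (F : Type*) [Field F] (ϖ : F) (h : ϖ ≠ 0) (n : ℕ) : GL (Fin 2) F :=
  Matrix.GeneralLinearGroup.mkOfDetNeZero !![1, 0; 0, ϖ ^ n]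
    (by simpa [Matrix.det_fin_two_of] using pow_ne_zero n h)

/-!
Write each of the three groups as a "congruence box": the matrices `[[a, b], [c, d]]` with
`‖a - 1‖, ‖d - 1‖ ≤ ε`, `‖b‖ ≤ β`, `‖c‖ ≤ γ`. If `‖z‖ ≤ ρ` with `βρ < 1`, the denominator
`bz + d` is a unit, and the ultrametric inequality applied to
`z·g - z = ((a - 1)z - bz² + c - (d - 1)z) / (bz + d)` shows that `g` moves `z` by at most `γ`
as soon as `ερ, βρ² ≤ γ`; the lower unipotents `[[1, 0], [t, 1]]`, `‖t‖ ≤ γ`, of any box with the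
same `γ` translate `z` across that whole disc. So two boxes sharing `ε` and `γ` have the same orbit
through `z`.

On `‖z‖ ≤ 1` this compares `G_e(k)` with `G_{v₁}(k)`, both having `γ = |ϖ|^{k-1}`. Near `∞`,
conjugation by `[[0, 1], [1, 0]]`, which acts by `z ↦ 1/z` and exchanges `b` and `c`, turns the
comparison of `G_e(k)` with `G_{v₀}(k)` into the same one on the disc `‖u‖ ≤ |ϖ|`, now with
`γ = |ϖ|^k`. Every point of `ℙ¹(F)` lies in one of the two regions, because `‖z‖ > 1` forces
`‖z‖ ≥ |ϖ|⁻¹`.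
-/

section Mobius

variable {F : Type*} [Field F]

def transposeGL (g : GL (Fin 2) F) : GL (Fin 2) F :=
  Matrix.GeneralLinearGroup.mkOfDetNeZero (g : Matrix (Fin 2) (Fin 2) F)ᵀ
    (by rw [Matrix.det_transpose]; exact g.det_ne_zero)

lemma transposeGL_mul (g h : GL (Fin 2) F) :
    transposeGL (g * h) = transposeGL h * transposeGL g := by
  ext : 1
  simp [transposeGL, Matrix.transpose_mul]

open scoped Classical in
lemma moeb_eq_transposeGL_smul (g : GL (Fin 2) F) (w : Option F) :
    moeb F g w = (transposeGL g • (show OnePoint F from w) : OnePoint F) := by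
  cases w with
  | none =>
    change _ = transposeGL g • (∞ : OnePoint F)
    rw [OnePoint.smul_infty_eq_ite]
    rfl
  | some z =>
    change _ = transposeGL g • ((z : F) : OnePoint F)
    rw [OnePoint.smul_some_eq_ite]
    rfl

open scoped Classical in
lemma moeb_mul (g h : GL (Fin 2) F) (w : Option F) :
    moeb F ((g * h : GL (Fin 2) F) : Matrix (Fin 2) (Fin 2) F) w = moeb F h (moeb F g w) := by
  rw [moeb_eq_transposeGL_smul, moeb_eq_transposeGL_smul, moeb_eq_transposeGL_smul,
    transposeGL_mul, mul_smul]

lemma moeb_one (w : Option F) :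
    moeb F ((1 : GL (Fin 2) F) : Matrix (Fin 2) (Fin 2) F) w = w := by
  cases w <;> simp [moeb]

lemma moeb_injective (g : GL (Fin 2) F) : Function.Injective (moeb F g) :=
  Function.LeftInverse.injective (g := moeb F ↑g⁻¹) fun w => by
    rw [← moeb_mul, mul_inv_cancel, moeb_one]

lemma orb_mono {S T : Set (GL (Fin 2) F)} (h : S ⊆ T) (w : Option F) :
    orb F S w ⊆ orb F T w :=
  fun _ ⟨g, hg, hw⟩ => ⟨g, h hg, hw⟩

lemma mem_conjSet_iff {h g : GL (Fin 2) F} {S : Set (GL (Fin 2) F)} :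
    g ∈ conjSet F h S ↔ h⁻¹ * g * h ∈ S := by
  constructor
  · rintro ⟨g', hg', rfl⟩
    simpa [mul_assoc] using hg'
  · exact fun hg => ⟨h⁻¹ * g * h, hg, by group⟩

lemma orb_conjSet (h : GL (Fin 2) F) (S : Set (GL (Fin 2) F)) (w : Option F) :
    orb F (conjSet F h S) (moeb F (h⁻¹ : GL (Fin 2) F) w) =
      moeb F (h⁻¹ : GL (Fin 2) F) '' orb F S w := by
  ext u
  constructor
  · rintro ⟨_, ⟨g, hg, rfl⟩, rfl⟩
    refine ⟨moeb F g w, ⟨g, hg, rfl⟩, ?_⟩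
    rw [moeb_mul, moeb_mul, ← moeb_mul h⁻¹, inv_mul_cancel, moeb_one]
  · rintro ⟨_, ⟨g, hg, rfl⟩, rfl⟩
    refine ⟨h * g * h⁻¹, ⟨g, hg, rfl⟩, ?_⟩
    rw [moeb_mul, moeb_mul, ← moeb_mul h⁻¹, inv_mul_cancel, moeb_one]

def lowerT (t : F) : GL (Fin 2) F :=
  Matrix.GeneralLinearGroup.mkOfDetNeZero !![1, 0; t, 1] (by simp [Matrix.det_fin_two_of])

lemma moeb_lowerT (t z : F) : moeb F (lowerT t : GL (Fin 2) F) (some z) = some (z + t) := by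
  simp [moeb, lowerT]

def swapGL : GL (Fin 2) F :=
  Matrix.GeneralLinearGroup.mkOfDetNeZero !![0, 1; 1, 0] (by simp [Matrix.det_fin_two_of])

lemma swapGL_inv : (swapGL⁻¹ : GL (Fin 2) F) = swapGL := by
  refine inv_eq_of_mul_eq_one_right (Units.ext ?_)
  simp [swapGL, Matrix.one_fin_two]

lemma moeb_swapGL_some {z : F} (hz : z ≠ 0) :
    moeb F (swapGL : GL (Fin 2) F) (some z) = some z⁻¹ := by
  simp [moeb, swapGL, hz]

lemma moeb_swapGL_none : moeb F (swapGL : GL (Fin 2) F) none = some 0 := by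
  simp [moeb, swapGL]

lemma coe_swapGL_conj (g : GL (Fin 2) F) :
    ((swapGL⁻¹ * g * swapGL : GL (Fin 2) F) : Matrix (Fin 2) (Fin 2) F) =
      !![g 1 1, g 1 0; g 0 1, g 0 0] := by
  rw [swapGL_inv, Units.val_mul, Units.val_mul]
  conv_lhs => rw [Matrix.eta_fin_two (g : Matrix (Fin 2) (Fin 2) F)]
  simp [swapGL]

lemma coe_dmat_inv {s : F} (hs : s ≠ 0) :
    ((dmat F s hs)⁻¹ : GL (Fin 2) F) = (!![s⁻¹, 0; 0, 1] : Matrix (Fin 2) (Fin 2) F) := by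
  rw [Matrix.coe_units_inv]
  refine Matrix.inv_eq_left_inv ?_
  simp [dmat, hs, Matrix.one_fin_two]

lemma coe_dmat_conj {s : F} (hs : s ≠ 0) (g : GL (Fin 2) F) :
    (((dmat F s hs)⁻¹ * g * dmat F s hs : GL (Fin 2) F) : Matrix (Fin 2) (Fin 2) F) =
      !![g 0 0, s⁻¹ * g 0 1; g 1 0 * s, g 1 1] := by
  rw [Units.val_mul, Units.val_mul, coe_dmat_inv]
  conv_lhs => rw [Matrix.eta_fin_two (g : Matrix (Fin 2) (Fin 2) F)]
  simp [dmat]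
  field_simp

end Mobius

section CongruenceBox

variable {F : Type*} [NormedField F]

def congruenceBox (F : Type*) [NormedField F] (ε β γ : ℝ) : Set (GL (Fin 2) F) :=
  {g | ‖(g : Matrix (Fin 2) (Fin 2) F) 0 0 - 1‖ ≤ ε ∧
       ‖(g : Matrix (Fin 2) (Fin 2) F) 0 1‖ ≤ β ∧
       ‖(g : Matrix (Fin 2) (Fin 2) F) 1 0‖ ≤ γ ∧
       ‖(g : Matrix (Fin 2) (Fin 2) F) 1 1 - 1‖ ≤ ε}

lemma congruenceBox_mono {ε β β' γ : ℝ} (h : β' ≤ β) :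
    congruenceBox F ε β' γ ⊆ congruenceBox F ε β γ :=
  fun _ ⟨ha, hb, hc, hd⟩ => ⟨ha, hb.trans h, hc, hd⟩

lemma lowerT_mem_congruenceBox {ε β γ : ℝ} (hε : 0 ≤ ε) (hβ : 0 ≤ β) {t : F}
    (ht : ‖t‖ ≤ γ) : lowerT t ∈ congruenceBox F ε β γ := by
  simp [congruenceBox, lowerT, hε, hβ, ht]

lemma conjSet_swapGL_congruenceBox (ε β γ : ℝ) :
    conjSet F swapGL (congruenceBox F ε β γ) = congruenceBox F ε γ β := by
  ext g
  simp only [mem_conjSet_iff, congruenceBox, Set.mem_ofPred_eq, coe_swapGL_conj,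
    Matrix.of_apply, Matrix.cons_val', Matrix.cons_val_zero, Matrix.cons_val_one,
    Matrix.empty_val', Matrix.cons_val_fin_one]
  tauto

lemma conjSet_dmat_congruenceBox {s : F} (hs : s ≠ 0) (ε β γ : ℝ) :
    conjSet F (dmat F s hs) (congruenceBox F ε β γ) =
      congruenceBox F ε (‖s‖ * β) (γ / ‖s‖) := by
  have hs' : 0 < ‖s‖ := norm_pos_iff.mpr hs
  ext g
  simp only [mem_conjSet_iff, congruenceBox, Set.mem_ofPred_eq, coe_dmat_conj,
    Matrix.of_apply, Matrix.cons_val', Matrix.cons_val_zero, Matrix.cons_val_one,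
    Matrix.empty_val', Matrix.cons_val_fin_one, norm_mul, norm_inv]
  rw [inv_mul_le_iff₀ hs', ← le_div_iff₀ hs']

variable {ϖ : F} {k : ℕ}

lemma Ge_eq_congruenceBox :
    Ge F ϖ k = congruenceBox F (‖ϖ‖ ^ k) (‖ϖ‖ ^ k) (‖ϖ‖ ^ (k - 1)) := rfl

lemma Gv0_eq_congruenceBox : Gv0 F ϖ k = congruenceBox F (‖ϖ‖ ^ k) (‖ϖ‖ ^ k) (‖ϖ‖ ^ k) := rfl

lemma Gv1_eq_congruenceBox (hϖ : ϖ ≠ 0) :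
    Gv1 F ϖ hϖ k = congruenceBox F (‖ϖ‖ ^ k) (‖ϖ‖ * ‖ϖ‖ ^ k) (‖ϖ‖ ^ k / ‖ϖ‖) :=
  conjSet_dmat_congruenceBox hϖ _ _ _

lemma IsUniformizer.inv_norm_le_norm (hϖ : IsUniformizer F ϖ) {z : F} (hz : 1 < ‖z‖) :
    ‖ϖ‖⁻¹ ≤ ‖z‖ := by
  have hz0 : 0 < ‖z‖ := one_pos.trans hz
  have := hϖ.2.2 z⁻¹ (by rw [norm_inv]; exact inv_lt_one_of_one_lt₀ hz)
  rw [norm_inv] at this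
  simpa using inv_anti₀ (inv_pos.mpr hz0) this

lemma exists_moeb_swapGL_eq_some_of_mem_regionInfty (hϖ : ϖ ≠ 0) {w : Option F}
    (hw : w ∈ regionInfty F ϖ) :
    ∃ u, moeb F (swapGL : GL (Fin 2) F) w = some u ∧ ‖u‖ ≤ ‖ϖ‖ := by
  rcases hw with rfl | ⟨z, rfl, hz⟩
  · exact ⟨0, moeb_swapGL_none, by simp⟩
  · have hz0 : 0 < ‖z‖ := (inv_pos.mpr (norm_pos_iff.mpr hϖ)).trans_le hz
    refine ⟨z⁻¹, moeb_swapGL_some (norm_pos_iff.mp hz0), ?_⟩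
    rw [norm_inv]
    exact inv_le_of_inv_le₀ (norm_pos_iff.mpr hϖ) hz

end CongruenceBox

section Ultrametric

variable {F : Type*} [NormedField F] [IsUltrametricDist F]

lemma IsUltrametricDist.norm_add_le_of_le {x y : F} {r : ℝ} (hx : ‖x‖ ≤ r) (hy : ‖y‖ ≤ r) :
    ‖x + y‖ ≤ r :=
  (IsUltrametricDist.norm_add_le_max x y).trans (max_le hx hy)

lemma norm_one_add_eq_one {x : F} (hx : ‖x‖ < 1) : ‖1 + x‖ = 1 := by
  rw [IsUltrametricDist.norm_add_eq_max_of_norm_ne_norm (by simpa using hx.ne'), norm_one,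
    max_eq_left (by simpa using hx.le)]

lemma exists_moeb_eq_some_of_mem_congruenceBox {ε β γ ρ : ℝ} {g : GL (Fin 2) F}
    (hg : g ∈ congruenceBox F ε β γ) (hε : ε < 1) {z : F} (hz : ‖z‖ ≤ ρ) (hβρ : β * ρ < 1)
    (hερ : ε * ρ ≤ γ) (hβρ2 : β * ρ ^ 2 ≤ γ) :
    ∃ w, moeb F g (some z) = some w ∧ ‖w - z‖ ≤ γ := by
  obtain ⟨ha, hb, hc, hd⟩ := hg
  set A := (g : Matrix (Fin 2) (Fin 2) F)
  have hε0 : 0 ≤ ε := (norm_nonneg _).trans ha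
  have hβ0 : 0 ≤ β := (norm_nonneg _).trans hb
  have hbz : ‖A 0 1 * z‖ ≤ β * ρ := by
    rw [norm_mul]; exact mul_le_mul hb hz (norm_nonneg _) hβ0
  have hden : ‖A 0 1 * z + A 1 1‖ = 1 := by
    have : A 0 1 * z + A 1 1 = 1 + (A 0 1 * z + (A 1 1 - 1)) := by ring
    rw [this, norm_one_add_eq_one]
    exact (IsUltrametricDist.norm_add_le_max _ _).trans_lt
      (max_lt (hbz.trans_lt hβρ) (hd.trans_lt hε))
  have hden0 : A 0 1 * z + A 1 1 ≠ 0 := norm_ne_zero_iff.mp (by rw [hden]; exact one_ne_zero)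
  refine ⟨(A 0 0 * z + A 1 0) / (A 0 1 * z + A 1 1), if_neg hden0, ?_⟩
  have hdiff : (A 0 0 * z + A 1 0) / (A 0 1 * z + A 1 1) - z =
      ((A 0 0 - 1) * z + -(A 0 1 * z * z) + (A 1 0 + -((A 1 1 - 1) * z))) /
        (A 0 1 * z + A 1 1) := by
    rw [eq_div_iff hden0, sub_mul, div_mul_cancel₀ _ hden0]
    ring
  rw [hdiff, norm_div, hden, div_one]
  refine IsUltrametricDist.norm_add_le_of_le
    (IsUltrametricDist.norm_add_le_of_le ?_ ?_) (IsUltrametricDist.norm_add_le_of_le hc ?_)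
  · rw [norm_mul]
    exact (mul_le_mul ha hz (norm_nonneg _) hε0).trans hερ
  · rw [norm_neg, norm_mul, norm_mul, mul_assoc, ← sq]
    exact (mul_le_mul hb (pow_le_pow_left₀ (norm_nonneg _) hz 2) (by positivity) hβ0).trans
      hβρ2
  · rw [norm_neg, norm_mul]
    exact (mul_le_mul hd hz (norm_nonneg _) hε0).trans hερ

theorem orb_congruenceBox_eq_of_le {ε β β' γ ρ : ℝ} (hε0 : 0 ≤ ε) (hε : ε < 1)
    (hβ'0 : 0 ≤ β') (hβ' : β' ≤ β) {z : F} (hz : ‖z‖ ≤ ρ) (hβρ : β * ρ < 1)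
    (hερ : ε * ρ ≤ γ) (hβρ2 : β * ρ ^ 2 ≤ γ) :
    orb F (congruenceBox F ε β γ) (some z) = orb F (congruenceBox F ε β' γ) (some z) := by
  refine subset_antisymm ?_ (orb_mono (congruenceBox_mono hβ') _)
  rintro _ ⟨g, hg, rfl⟩
  obtain ⟨w, hgz, hw⟩ := exists_moeb_eq_some_of_mem_congruenceBox hg hε hz hβρ hερ hβρ2
  exact ⟨lowerT (w - z), lowerT_mem_congruenceBox hε0 hβ'0 hw, by
    rw [hgz, moeb_lowerT, add_sub_cancel]⟩

variable {ϖ : F} {k : ℕ}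

theorem orb_Ge_eq_orb_Gv1 (hϖ : IsUniformizer F ϖ) (hk : 1 ≤ k) {z : F} (hz : ‖z‖ ≤ 1) :
    orb F (Ge F ϖ k) (some z) = orb F (Gv1 F ϖ hϖ.1 k) (some z) := by
  have hϖ0 : 0 < ‖ϖ‖ := norm_pos_iff.mpr hϖ.1
  have hpow : ‖ϖ‖ ^ k < 1 := pow_lt_one₀ hϖ0.le hϖ.2.1 (by omega)
  have hpred : ‖ϖ‖ ^ (k - 1) = ‖ϖ‖ ^ k / ‖ϖ‖ := by
    rw [eq_div_iff hϖ0.ne', ← pow_succ, Nat.sub_add_cancel hk]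
  have hle : ‖ϖ‖ ^ k ≤ ‖ϖ‖ ^ k / ‖ϖ‖ := le_div_self (by positivity) hϖ0 hϖ.2.1.le
  rw [Ge_eq_congruenceBox, Gv1_eq_congruenceBox, hpred]
  refine orb_congruenceBox_eq_of_le (by positivity) hpow (by positivity)
    (mul_le_of_le_one_left (by positivity) hϖ.2.1.le) hz (by simpa using hpow) ?_ ?_ <;>
  simpa using hle

theorem orb_Ge_eq_orb_Gv0 (hϖ : IsUniformizer F ϖ) (hk : 1 ≤ k) {w : Option F}
    (hw : w ∈ regionInfty F ϖ) :
    orb F (Ge F ϖ k) w = orb F (Gv0 F ϖ k) w := by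
  have hϖ0 : 0 < ‖ϖ‖ := norm_pos_iff.mpr hϖ.1
  have hpow : ‖ϖ‖ ^ k < 1 := pow_lt_one₀ hϖ0.le hϖ.2.1 (by omega)
  have hpred : ‖ϖ‖ ^ (k - 1) * ‖ϖ‖ = ‖ϖ‖ ^ k := by rw [← pow_succ, Nat.sub_add_cancel hk]
  have hle : ‖ϖ‖ ^ k * ‖ϖ‖ ≤ ‖ϖ‖ ^ k := mul_le_of_le_one_right (by positivity) hϖ.2.1.le
  obtain ⟨u, hu, hu'⟩ := exists_moeb_swapGL_eq_some_of_mem_regionInfty hϖ.1 hw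
  refine (moeb_injective swapGL⁻¹).image_injective ?_
  rw [← orb_conjSet, ← orb_conjSet, Ge_eq_congruenceBox, Gv0_eq_congruenceBox,
    conjSet_swapGL_congruenceBox, conjSet_swapGL_congruenceBox, swapGL_inv, hu]
  refine orb_congruenceBox_eq_of_le (by positivity) hpow (by positivity)
    (pow_le_pow_of_le_one hϖ0.le hϖ.2.1.le (by omega)) hu' (by rwa [hpred]) hle ?_
  rwa [sq, ← mul_assoc, hpred]

end Ultrametric

theorem statement12_general (F : Type*) [NontriviallyNormedField F]
    [IsUltrametricDist F]
    (ϖ : F) (hϖ : IsUniformizer F ϖ) (k : ℕ) (hk : 1 ≤ k) :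
    (∀ D : Set (Option F), IsOrbit F (Ge F ϖ k) D →
      IsOrbit F (Gv0 F ϖ k) D ∨ IsOrbit F (Gv1 F ϖ hϖ.1 k) D) ∧
    (∀ z₀ : F, ‖z₀‖ ≤ 1 →
      orb F (Ge F ϖ k) (Option.some z₀) = orb F (Gv1 F ϖ hϖ.1 k) (Option.some z₀)) ∧
    (∀ w₀ ∈ regionInfty F ϖ, orb F (Ge F ϖ k) w₀ = orb F (Gv0 F ϖ k) w₀) := by
  refine ⟨?_, fun z₀ hz₀ => orb_Ge_eq_orb_Gv1 hϖ hk hz₀,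
    fun w₀ hw₀ => orb_Ge_eq_orb_Gv0 hϖ hk hw₀⟩
  rintro D ⟨w, rfl⟩
  rcases w with _ | z
  · exact Or.inl ⟨none, orb_Ge_eq_orb_Gv0 hϖ hk (Or.inl rfl)⟩
  by_cases hz : ‖z‖ ≤ 1
  · exact Or.inr ⟨some z, orb_Ge_eq_orb_Gv1 hϖ hk hz⟩
  · exact Or.inl ⟨some z, orb_Ge_eq_orb_Gv0 hϖ hk
      (Or.inr ⟨z, rfl, hϖ.inv_norm_le_norm (not_le.mp hz)⟩)⟩

theorem statement12 (p : ℕ) [Fact p.Prime] (F : Type*) [NontriviallyNormedField F]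
    [IsUltrametricDist F] [NormedAlgebra ℚ_[p] F] [FiniteDimensional ℚ_[p] F]
    (ϖ : F) (hϖ : IsUniformizer F ϖ) (k : ℕ) (hk : 1 ≤ k) :
    (∀ D : Set (Option F), IsOrbit F (Ge F ϖ k) D →
      IsOrbit F (Gv0 F ϖ k) D ∨ IsOrbit F (Gv1 F ϖ hϖ.1 k) D) ∧
    (∀ z₀ : F, ‖z₀‖ ≤ 1 →
      orb F (Ge F ϖ k) (Option.some z₀) = orb F (Gv1 F ϖ hϖ.1 k) (Option.some z₀)) ∧
    (∀ w₀ ∈ regionInfty F ϖ, orb F (Ge F ϖ k) w₀ = orb F (Gv0 F ϖ k) w₀) :=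
  statement12_general F ϖ hϖ k hk
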